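/- arXiv:1405.5988 — 2 statements merged into one kernel-verified Lean document; each statement's English description precedes it below -/
import Mathlib

section
/- The 1CSP instance E = (11, 155, l) with unit demands and l = (9, 12, 12, 16, 16, 46, 46, 54, 69, 77, 102) satisfies Δ_p(E) = 126/125; in particular, there exists a 1CSP instance with demand n = 11 whose proper gap is strictly larger than 1. -/
open Finset
open scoped ENNReal NNReal

/-- A 1CSP instance with unit demands: `n` is a positive integer, the piece
lengths satisfy `0 < l 0 ≤ l 1 ≤ … ≤ l (n-1) ≤ L`. -/
def IsInstance (n : ℕ) (L : ℝ) (l : Fin n → ℝ) : Prop :=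
  0 < n ∧ (∀ i, 0 < l i) ∧ (∀ i j : Fin n, i ≤ j → l i ≤ l j) ∧ (∀ i, l i ≤ L)

/-- a binary (0/1) pattern -/
def IsBinary {n : ℕ} (a : Fin n → ℕ) : Prop := ∀ i, a i ≤ 1

/-- The set of feasible patterns `P^f(E)`. -/
def feasiblePatterns (n : ℕ) (L : ℝ) (l : Fin n → ℝ) : Set (Fin n → ℕ) :=
  {a | ∑ i, l i * (a i : ℝ) ≤ L}

/-- The set of proper patterns `P^p(E)` (for unit demands). -/
def properPatterns (n : ℕ) (L : ℝ) (l : Fin n → ℝ) : Set (Fin n → ℕ) :=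
  {a | IsBinary a ∧ ∑ i, l i * (a i : ℝ) ≤ L}

/-- `z_D(P,E)`: minimum of `∑ x_a` over finitely supported `x : P → ℤ_{≥0}`
with `∑ x_a • a = 𝟏`; (`⊤` if infeasible). -/
noncomputable def zD (n : ℕ) (P : Set (Fin n → ℕ)) : ℝ≥0∞ :=
  sInf {c : ℝ≥0∞ | ∃ x : (Fin n → ℕ) →₀ ℕ,
    (∀ a ∈ x.support, a ∈ P) ∧
    (∀ i, ∑ a ∈ x.support, x a * a i = 1) ∧
    c = ∑ a ∈ x.support, (x a : ℝ≥0∞)}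

/-- `z_C(P,E)`: infimum of `∑ x_a` over finitely supported `x : P → ℝ_{≥0}`
with `∑ x_a • a = 𝟏`; (`⊤` if infeasible). -/
noncomputable def zC (n : ℕ) (P : Set (Fin n → ℕ)) : ℝ≥0∞ :=
  sInf {c : ℝ≥0∞ | ∃ x : (Fin n → ℕ) →₀ NNReal,
    (∀ a ∈ x.support, a ∈ P) ∧
    (∀ i, ∑ a ∈ x.support, (x a : ℝ) * (a i : ℝ) = 1) ∧
    c = ∑ a ∈ x.support, (x a : ℝ≥0∞)}

noncomputable def zDf (n : ℕ) (L : ℝ) (l : Fin n → ℝ) : ℝ≥0∞ :=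
  zD n (feasiblePatterns n L l)

noncomputable def zCf (n : ℕ) (L : ℝ) (l : Fin n → ℝ) : ℝ≥0∞ :=
  zC n (feasiblePatterns n L l)

noncomputable def zCp (n : ℕ) (L : ℝ) (l : Fin n → ℝ) : ℝ≥0∞ :=
  zC n (properPatterns n L l)

/-- the gap `Δ(E) = z_D^f(E) - z_C^f(E)` -/
noncomputable def gap (n : ℕ) (L : ℝ) (l : Fin n → ℝ) : ℝ≥0∞ :=
  zDf n L l - zCf n L l

/-- the proper gap `Δ_p(E) = z_D^f(E) - z_C^p(E)` -/
noncomputable def properGap (n : ℕ) (L : ℝ) (l : Fin n → ℝ) : ℝ≥0∞ :=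
  zDf n L l - zCp n L l

/-- the dominance relation `a ⪯ b`: all suffix sums of `a` are at most those of `b`. -/
def Dominates {n : ℕ} (a b : Fin n → ℕ) : Prop :=
  ∀ j : Fin n, ∑ i ∈ univ.filter (fun i => j ≤ i), a i ≤
    ∑ i ∈ univ.filter (fun i => j ≤ i), b i

/-!
`z_D^f(E) = 4`: four bins of length 155 hold all items, and an integer cover by at most three
patterns would sort the items into three bins, which is impossible (the total length 459 leaves a
slack of only 6, and an exhaustive search rules it out).

`z_C^p(E) = 374/125`: eleven proper patterns with multiplicities `x/125` cover every item exactly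
once, and weak LP duality gives the matching lower bound from integer item weights `w` with
`∑ w = 374`, once a 0/1 knapsack computation shows that no proper pattern has `w`-weight above 125.
Hence `Δ_p(E) = 4 - 374/125 = 126/125`.
-/

lemma Finsupp.mem_support_sum_single {α M ι : Type*} [Fintype ι] [AddCommMonoid M] [DecidableEq α]
    {p : ι → α} {c : ι → M} {a : α} (ha : a ∈ (∑ k, Finsupp.single (p k) (c k)).support) :
    ∃ k, p k = a := by
  obtain ⟨k, -, hk⟩ := Finset.mem_biUnion.mp (Finsupp.support_finsetSum ha)
  exact ⟨k, (Finset.mem_singleton.mp (Finsupp.support_single_subset hk)).symm⟩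

lemma Finsupp.sum_support_sum_single {α M N ι : Type*} [Fintype ι] [AddCommMonoid M]
    [AddCommMonoid N] (p : ι → α) (c : ι → M) {h : α → M → N} (h_zero : ∀ a, h a 0 = 0)
    (h_add : ∀ a b₁ b₂, h a (b₁ + b₂) = h a b₁ + h a b₂) :
    ∑ a ∈ (∑ k, Finsupp.single (p k) (c k)).support, h a ((∑ k, Finsupp.single (p k) (c k)) a)
      = ∑ k, h (p k) (c k) := by
  change Finsupp.sum _ h = _
  rw [← Finsupp.sum_finsetSum_index h_zero h_add]
  exact Finset.sum_congr rfl fun k _ => Finsupp.sum_single_index (h_zero _)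

section Bounds

variable {n : ℕ}

lemma zD_le_of_cover {ι : Type*} [Fintype ι] {P : Set (Fin n → ℕ)} (p : ι → Fin n → ℕ)
    (c : ι → ℕ) (hp : ∀ k, p k ∈ P) (hcover : ∀ i, ∑ k, c k * p k i = 1) :
    zD n P ≤ ∑ k, (c k : ℝ≥0∞) := by
  classical
  refine sInf_le ⟨∑ k, Finsupp.single (p k) (c k), fun a ha => ?_, fun i => ?_, ?_⟩
  · obtain ⟨k, rfl⟩ := Finsupp.mem_support_sum_single ha
    exact hp k
  · rw [Finsupp.sum_support_sum_single p c (h := fun a v => v * a i) (fun _ => zero_mul _)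
      (fun _ _ _ => add_mul _ _ _)]
    exact hcover i
  · rw [Finsupp.sum_support_sum_single p c (h := fun _ v => (v : ℝ≥0∞)) (fun _ => Nat.cast_zero)
      (fun _ _ _ => Nat.cast_add _ _)]

lemma zC_le_of_cover {ι : Type*} [Fintype ι] {P : Set (Fin n → ℕ)} (p : ι → Fin n → ℕ)
    (c : ι → ℝ≥0) (hp : ∀ k, p k ∈ P) (hcover : ∀ i, ∑ k, (c k : ℝ) * p k i = 1) :
    zC n P ≤ ∑ k, (c k : ℝ≥0∞) := by
  classical
  refine sInf_le ⟨∑ k, Finsupp.single (p k) (c k), fun a ha => ?_, fun i => ?_, ?_⟩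
  · obtain ⟨k, rfl⟩ := Finsupp.mem_support_sum_single ha
    exact hp k
  · rw [Finsupp.sum_support_sum_single p c (h := fun a v => (v : ℝ) * a i)
      (fun _ => by simp) (fun _ _ _ => by push_cast; ring)]
    exact hcover i
  · rw [Finsupp.sum_support_sum_single p c (h := fun _ v => (v : ℝ≥0∞)) (fun _ => ENNReal.coe_zero)
      (fun _ _ _ => ENNReal.coe_add _ _)]

lemma le_zC_of_dual {P : Set (Fin n → ℕ)} (w : Fin n → ℝ)
    (hw : ∀ a ∈ P, ∑ i, w i * a i ≤ 1) : ENNReal.ofReal (∑ i, w i) ≤ zC n P := by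
  refine le_sInf ?_
  rintro _ ⟨x, hP, hcover, rfl⟩
  rw [← ENNReal.ofNNReal_finsetSum, ← ENNReal.ofReal_coe_nnreal, NNReal.coe_sum]
  refine ENNReal.ofReal_le_ofReal ?_
  calc ∑ i, w i = ∑ i, w i * ∑ a ∈ x.support, (x a : ℝ) * a i := by simp [hcover]
    _ = ∑ a ∈ x.support, (x a : ℝ) * ∑ i, w i * a i := by
      simp only [Finset.mul_sum]
      rw [Finset.sum_comm]
      exact Finset.sum_congr rfl fun _ _ => Finset.sum_congr rfl fun _ _ => by ring
    _ ≤ ∑ a ∈ x.support, (x a : ℝ) := by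
      refine Finset.sum_le_sum fun a ha => ?_
      simpa using mul_le_mul_of_nonneg_left (hw a (hP a ha)) (x a).coe_nonneg

def BinPackable (k : ℕ) (L : ℝ) (l : Fin n → ℝ) : Prop :=
  ∃ g : Fin n → Fin k, ∀ j, ∑ i, (if g i = j then l i else 0) ≤ L

lemma natCast_add_one_le_zDf_of_not_binPackable {k : ℕ} {L : ℝ} {l : Fin n → ℝ} (hL : 0 ≤ L)
    (hl : ∀ i, 0 ≤ l i) (hpack : ¬ BinPackable k L l) : ((k + 1 : ℕ) : ℝ≥0∞) ≤ zDf n L l := by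
  refine le_sInf ?_
  rintro _ ⟨x, hP, hcover, rfl⟩
  rw [← Nat.cast_sum, Nat.cast_le, Nat.add_one_le_iff]
  by_contra! hsum
  have hcard : x.support.card ≤ k := by
    simpa using (Finset.card_nsmul_le_sum x.support x 1 fun a ha => Nat.one_le_iff_ne_zero.mpr
      (Finsupp.mem_support_iff.mp ha)).trans hsum
  obtain ⟨e⟩ : Nonempty (x.support ↪ Fin k) :=
    Function.Embedding.nonempty_of_card_le (by simpa using hcard)
  have hcovered : ∀ i, ∃ a ∈ x.support, a i ≠ 0 := fun i => by
    obtain ⟨a, ha, hne⟩ := Finset.exists_ne_zero_of_sum_ne_zero ((hcover i).trans_ne one_ne_zero)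
    exact ⟨a, ha, right_ne_zero_of_mul hne⟩
  choose cov hcov_mem hcov_pos using hcovered
  -- bin `j` holds the items whose chosen covering pattern is the `j`-th pattern of the support
  refine hpack ⟨fun i => e ⟨cov i, hcov_mem i⟩, fun j => ?_⟩
  by_cases hbin : ∃ i₀, e ⟨cov i₀, hcov_mem i₀⟩ = j
  · obtain ⟨i₀, hi₀⟩ := hbin
    refine (Finset.sum_le_sum fun i _ => ?_).trans (hP _ (hcov_mem i₀))
    split_ifs with hi
    · have : cov i = cov i₀ := congrArg Subtype.val (e.injective (hi.trans hi₀.symm))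
      rw [← this]
      exact le_mul_of_one_le_right (hl i)
        (by exact_mod_cast Nat.one_le_iff_ne_zero.mpr (hcov_pos i))
    · exact mul_nonneg (hl i) (Nat.cast_nonneg _)
  · simp only [not_exists] at hbin
    simpa [hbin] using hL

end Bounds

def knapsack : ℕ → List (ℕ × ℕ) → ℕ
  | _, [] => 0
  | C, (l, w) :: t => max (knapsack C t) (if l ≤ C then w + knapsack (C - l) t else 0)

lemma sum_mul_le_knapsack {n : ℕ} (l w a : Fin n → ℕ) (ha : IsBinary a) {C : ℕ}
    (hC : ∑ i, l i * a i ≤ C) :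
    ∑ i, w i * a i ≤ knapsack C (List.ofFn fun i => (l i, w i)) := by
  induction n generalizing C with
  | zero => simp
  | succ n ih =>
    rw [Fin.sum_univ_succ] at hC ⊢
    rw [List.ofFn_succ, knapsack]
    have ih' := fun C => ih (fun i => l i.succ) (fun i => w i.succ) (fun i => a i.succ)
      (fun i => ha i.succ) (C := C)
    rcases Nat.le_one_iff_eq_zero_or_eq_one.mp (ha 0) with h0 | h0
    · simp only [h0, mul_zero, zero_add] at hC ⊢
      exact le_max_of_le_left (ih' C hC)
    · simp only [h0, mul_one] at hC ⊢
      refine le_max_of_le_right ?_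
      rw [if_pos (by omega)]
      exact Nat.add_le_add_left (ih' (C - l 0) (by omega)) _

def canPack {k : ℕ} (C : ℕ) : List ℕ → (Fin k → ℕ) → Bool
  | [], _ => true
  | l :: t, load => (List.finRange k).any fun j =>
      decide (load j + l ≤ C) && canPack C t (Function.update load j (load j + l))

lemma canPack_of_forall_le {n k C : ℕ} (f : Fin n → ℕ) (load : Fin k → ℕ) (g : Fin n → Fin k)
    (hg : ∀ j, load j + ∑ i, (if g i = j then f i else 0) ≤ C) :
    canPack C (List.ofFn f) load = true := by
  induction n generalizing load with
  | zero => rfl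
  | succ n ih =>
    simp only [Fin.sum_univ_succ] at hg
    rw [List.ofFn_succ, canPack, List.any_eq_true]
    refine ⟨g 0, List.mem_finRange _, ?_⟩
    rw [Bool.and_eq_true, decide_eq_true_iff]
    refine ⟨?_, ih _ _ (g ∘ Fin.succ) fun j => ?_⟩
    · have := hg (g 0)
      rw [if_pos rfl] at this
      omega
    · have := hg j
      rcases eq_or_ne (g 0) j with rfl | hj
      · rw [if_pos rfl] at this
        rw [Function.update_self]
        simp only [Function.comp_apply]
        omega
      · simpa [hj, Function.update_of_ne hj.symm] using this

lemma mem_feasiblePatterns_natCast_iff {n L : ℕ} {l a : Fin n → ℕ} :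
    a ∈ feasiblePatterns n L (fun i => (l i : ℝ)) ↔ ∑ i, l i * a i ≤ L := by
  simp only [feasiblePatterns, Set.mem_ofPred_eq]
  exact_mod_cast Iff.rfl

lemma mem_properPatterns_natCast_iff {n L : ℕ} {l a : Fin n → ℕ} :
    a ∈ properPatterns n L (fun i => (l i : ℝ)) ↔ IsBinary a ∧ ∑ i, l i * a i ≤ L := by
  simp only [properPatterns, Set.mem_ofPred_eq]
  exact_mod_cast Iff.rfl

namespace GapExample

def lengths : Fin 11 → ℕ := ![9, 12, 12, 16, 16, 46, 46, 54, 69, 77, 102]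

lemma natCast_lengths :
    (fun i => (lengths i : ℝ)) = ![9, 12, 12, 16, 16, 46, 46, 54, 69, 77, 102] := by
  funext i
  fin_cases i <;> simp [lengths]

lemma isInstance : IsInstance 11 155 (fun i => (lengths i : ℝ)) := by
  have hpos : ∀ i, 0 < lengths i := by decide
  have hmono : ∀ i j, i ≤ j → lengths i ≤ lengths j := by decide
  have hle : ∀ i, lengths i ≤ 155 := by decide
  exact ⟨by norm_num, fun i => Nat.cast_pos.mpr (hpos i),
    fun i j hij => Nat.cast_le.mpr (hmono i j hij),
    fun i => (Nat.cast_le.mpr (hle i)).trans_eq Nat.cast_ofNat⟩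

def bins : Fin 4 → Fin 11 → ℕ :=
  ![![0, 1, 0, 0, 0, 0, 0, 0, 0, 0, 1],
    ![1, 0, 0, 0, 0, 0, 0, 0, 1, 1, 0],
    ![0, 0, 1, 1, 1, 0, 1, 1, 0, 0, 0],
    ![0, 0, 0, 0, 0, 1, 0, 0, 0, 0, 0]]

lemma zDf_le : zDf 11 155 (fun i => (lengths i : ℝ)) ≤ 4 := by
  have hfeas : ∀ k, ∑ i, lengths i * bins k i ≤ 155 := by decide
  have hcover : ∀ i, ∑ k, 1 * bins k i = 1 := by decide
  refine (zD_le_of_cover bins (fun _ => 1)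
    (fun k => by exact_mod_cast mem_feasiblePatterns_natCast_iff.mpr (hfeas k)) hcover).trans_eq ?_
  simp

-- The items are searched in decreasing order of length, so that overfull bins are pruned early.
lemma not_canPack_three_bins :
    canPack 155 (List.ofFn fun i => lengths i.rev) (0 : Fin 3 → ℕ) = false := by
  decide

lemma not_binPackable_three : ¬ BinPackable 3 155 (fun i => (lengths i : ℝ)) := by
  rintro ⟨g, hg⟩
  have hfit : ∀ j, 0 + ∑ i : Fin 11, (if g i.rev = j then lengths i.rev else 0) ≤ 155 := fun j => by
    have hrev := Equiv.sum_comp Fin.revPerm fun i => if g i = j then lengths i else 0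
    simp only [Fin.revPerm_apply] at hrev
    have hj := hg j
    dsimp only at hj
    rw [zero_add, hrev]
    exact_mod_cast hj
  have := canPack_of_forall_le _ 0 _ hfit
  rw [not_canPack_three_bins] at this
  exact Bool.false_ne_true this

lemma le_zDf : 4 ≤ zDf 11 155 (fun i => (lengths i : ℝ)) := by
  simpa using natCast_add_one_le_zDf_of_not_binPackable (by norm_num)
    (fun i => Nat.cast_nonneg _) not_binPackable_three

lemma zDf_eq : zDf 11 155 (fun i => (lengths i : ℝ)) = 4 := le_antisymm zDf_le le_zDf

def dualWeights : Fin 11 → ℕ := ![5, 9, 9, 12, 12, 38, 38, 44, 57, 63, 87]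

lemma knapsack_dualWeights :
    knapsack 155 (List.ofFn fun i => (lengths i, dualWeights i)) ≤ 125 := by
  decide

lemma le_zCp : 374 / 125 ≤ zCp 11 155 (fun i => (lengths i : ℝ)) := by
  have hw : ∀ a ∈ properPatterns 11 155 (fun i => (lengths i : ℝ)),
      ∑ i, (dualWeights i / 125 : ℝ) * a i ≤ 1 := fun a ha => by
    obtain ⟨hbin, hlen⟩ := mem_properPatterns_natCast_iff.mp (by exact_mod_cast ha)
    have hnat := (sum_mul_le_knapsack _ dualWeights a hbin hlen).trans knapsack_dualWeights
    have hreal : ∑ i, (dualWeights i : ℝ) * a i ≤ 125 := by exact_mod_cast hnat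
    simp only [div_mul_eq_mul_div, ← Finset.sum_div]
    linarith
  have hsum : ∑ i, (dualWeights i / 125 : ℝ) = 374 / 125 := by
    rw [← Finset.sum_div, ← Nat.cast_sum, show ∑ i, dualWeights i = 374 by decide]
    norm_num
  have := le_zC_of_dual _ hw
  rwa [hsum, ENNReal.ofReal_div_of_pos (by norm_num), ENNReal.ofReal_ofNat,
    ENNReal.ofReal_ofNat] at this

def props : Fin 11 → Fin 11 → ℕ :=
  ![![0, 0, 0, 1, 1, 0, 1, 0, 0, 1, 0],
    ![1, 0, 0, 0, 0, 1, 1, 1, 0, 0, 0],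
    ![1, 1, 0, 1, 1, 0, 0, 0, 0, 0, 1],
    ![0, 1, 1, 1, 0, 1, 0, 0, 1, 0, 0],
    ![0, 1, 1, 0, 0, 0, 0, 1, 0, 1, 0],
    ![0, 0, 0, 0, 0, 0, 1, 0, 0, 0, 1],
    ![1, 0, 1, 1, 1, 0, 0, 0, 0, 0, 1],
    ![1, 0, 0, 0, 0, 0, 0, 0, 1, 1, 0],
    ![0, 0, 0, 0, 0, 1, 0, 0, 0, 0, 1],
    ![0, 1, 1, 0, 1, 0, 1, 0, 1, 0, 0],
    ![0, 0, 0, 1, 1, 0, 0, 1, 1, 0, 0]]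

def coeffs : Fin 11 → ℕ := ![29, 42, 20, 26, 53, 28, 20, 43, 57, 26, 30]

lemma zCp_le : zCp 11 155 (fun i => (lengths i : ℝ)) ≤ 374 / 125 := by
  have hprop : ∀ k, (∀ i, props k i ≤ 1) ∧ ∑ i, lengths i * props k i ≤ 155 := by decide
  have hcover : ∀ i, ∑ k, coeffs k * props k i = 125 := by decide
  refine (zC_le_of_cover props (fun k => coeffs k / 125)
    (fun k => by exact_mod_cast mem_properPatterns_natCast_iff.mpr (hprop k))
    fun i => ?_).trans_eq ?_
  · have hreal : ∑ k, (coeffs k : ℝ) * props k i = 125 := by exact_mod_cast hcover i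
    simp only [NNReal.coe_div, NNReal.coe_natCast, div_mul_eq_mul_div, ← Finset.sum_div, hreal]
    norm_num
  · rw [← ENNReal.ofNNReal_finsetSum, ← Finset.sum_div, ← Nat.cast_sum,
      show ∑ k, coeffs k = 374 by decide, ENNReal.coe_div (by norm_num)]
    simp

lemma zCp_eq : zCp 11 155 (fun i => (lengths i : ℝ)) = 374 / 125 := le_antisymm zCp_le le_zCp

lemma properGap_eq : properGap 11 155 (fun i => (lengths i : ℝ)) = 126 / 125 := by
  rw [properGap, zDf_eq, zCp_eq]
  refine ENNReal.sub_eq_of_eq_add (ENNReal.div_lt_top (by norm_num) (by norm_num)).ne ?_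
  rw [ENNReal.div_add_div_same, ENNReal.eq_div_iff (by norm_num) (by norm_num)]
  norm_num

end GapExample

/-- the instance `E = (11, 155, (9,12,12,16,16,46,46,54,69,77,102))`
satisfies `Δ_p(E) = 126/125`; in particular some instance with demand `11` has
proper gap strictly larger than `1`. -/
theorem stmt_18 :
    properGap 11 155 ![9, 12, 12, 16, 16, 46, 46, 54, 69, 77, 102] = 126 / 125 ∧
    ∃ (L : ℝ) (l : Fin 11 → ℝ), IsInstance 11 L l ∧ 1 < properGap 11 L l := by
  rw [← GapExample.natCast_lengths]
  refine ⟨GapExample.properGap_eq, 155, _, GapExample.isInstance, ?_⟩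
  rw [GapExample.properGap_eq, ENNReal.lt_div_iff_mul_lt (by norm_num) (by norm_num)]
  norm_num
end

section
/- The 1CSP instance E = (14, 42, l) with unit demands and l = (7, 7, 10, 10, 12, 15, 15, 21, 21, 21, 22, 22, 28, 31) satisfies Δ_p(E) = 17/16 = 1.0625. -/
open Finset
open scoped ENNReal NNReal

/-!
The upper bounds are explicit: a packing into 7 bins, and a fractional cover by 14 proper
patterns of total weight 95/16. The dual solution `(2,2,3,3,4,6,6,8,8,8,10,10,12,13)/16` has
value at most 1 on every proper pattern and sum 95/16, so `z_C^p = 95/16`.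

For `z_D^f ≥ 7`, an exact integer cover is a partition of the items into bins of length at
most 42. Give weight 2 to the items of length at least 22 and weight 1 to the three 21s: no bin
has weight more than 2 and the total is 11, so if there are at most 6 bins then every bin
contains an item of length at least 21. In such a bin a 15 leaves at least 5 units unused, and
the 31 leaves at least 1 (no items sum to 11). Adding this waste to the lengths gives a total of
`242 + 5 + 5 + 1 = 253 > 6 * 42`.
-/

section Covers

variable {n : ℕ}

theorem Finsupp.sum_sum_single {α ι R M : Type*} [AddCommMonoid R] [AddCommMonoid M]
    (s : Finset ι) (p : ι → α) (w : ι → R) {h : α → R → M} (h_zero : ∀ a, h a 0 = 0)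
    (h_add : ∀ a r₁ r₂, h a (r₁ + r₂) = h a r₁ + h a r₂) :
    (∑ k ∈ s, Finsupp.single (p k) (w k)).sum h = ∑ k ∈ s, h (p k) (w k) := by
  rw [← Finsupp.sum_finsetSum_index h_zero h_add]
  exact Finset.sum_congr rfl fun k _ => Finsupp.sum_single_index (h_zero _)

theorem Finsupp.support_sum_single_subset {α ι R : Type*} [AddCommMonoid R] [DecidableEq α]
    (s : Finset ι) (p : ι → α) (w : ι → R) :
    (∑ k ∈ s, Finsupp.single (p k) (w k)).support ⊆ s.image p := by
  refine Finsupp.support_finsetSum.trans fun a ha => ?_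
  obtain ⟨k, hk, ha⟩ := Finset.mem_biUnion.mp ha
  rw [Finset.mem_singleton.mp (Finsupp.support_single_subset ha)]
  exact Finset.mem_image_of_mem p hk

theorem zD_le_card {ι : Type*} [Fintype ι] {P : Set (Fin n → ℕ)} (p : ι → Fin n → ℕ)
    (hp : ∀ k, p k ∈ P) (hcov : ∀ i, ∑ k, p k i = 1) : zD n P ≤ Fintype.card ι := by
  classical
  refine sInf_le ⟨∑ k, Finsupp.single (p k) 1, fun a ha => ?_, fun i => ?_, ?_⟩
  · obtain ⟨k, -, rfl⟩ := Finset.mem_image.mp (Finsupp.support_sum_single_subset _ _ _ ha)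
    exact hp k
  · exact (Finsupp.sum_sum_single univ p (fun _ => 1) (h := fun a r => r * a i)
      (fun _ => zero_mul _) fun _ _ _ => add_mul _ _ _).trans (by simpa using hcov i)
  · have := Finsupp.sum_sum_single univ p (fun _ => (1 : ℕ)) (h := fun _ r => (r : ℝ≥0∞))
      (fun _ => Nat.cast_zero) fun _ _ _ => Nat.cast_add _ _
    simpa [Finsupp.sum] using this.symm

theorem zC_le_sum {ι : Type*} [Fintype ι] {P : Set (Fin n → ℕ)} (p : ι → Fin n → ℕ)
    (w : ι → ℝ≥0) (hp : ∀ k, p k ∈ P) (hcov : ∀ i, ∑ k, (w k : ℝ) * p k i = 1) :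
    zC n P ≤ ∑ k, (w k : ℝ≥0∞) := by
  classical
  refine sInf_le ⟨∑ k, Finsupp.single (p k) (w k), fun a ha => ?_, fun i => ?_, ?_⟩
  · obtain ⟨k, -, rfl⟩ := Finset.mem_image.mp (Finsupp.support_sum_single_subset _ _ _ ha)
    exact hp k
  · exact (Finsupp.sum_sum_single univ p w (h := fun a r => (r : ℝ) * a i)
      (fun _ => by simp) fun _ _ _ => by push_cast; ring).trans (hcov i)
  · exact (Finsupp.sum_sum_single univ p w (h := fun _ r => (r : ℝ≥0∞))
      (fun _ => ENNReal.coe_zero) fun _ _ _ => by simp).symm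

theorem sum_mul_dotProduct_eq_sum_of_cover {R : Type*} [CommSemiring R]
    (B : Finset (Fin n → ℕ)) (x : (Fin n → ℕ) → R) (hcov : ∀ i, ∑ a ∈ B, x a * (a i : R) = 1)
    (v : Fin n → R) : ∑ a ∈ B, x a * (v ⬝ᵥ fun i => (a i : R)) = ∑ i, v i := by
  simp_rw [dotProduct, Finset.mul_sum]
  rw [Finset.sum_comm]
  refine Finset.sum_congr rfl fun i _ => ?_
  calc ∑ a ∈ B, x a * (v i * a i) = v i * ∑ a ∈ B, x a * a i := by
        rw [Finset.mul_sum]; exact Finset.sum_congr rfl fun a _ => by ring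
    _ = v i := by rw [hcov i, mul_one]

theorem ofReal_sum_le_zC {P : Set (Fin n → ℕ)} (y : Fin n → ℝ)
    (hy : ∀ a ∈ P, (y ⬝ᵥ fun i => (a i : ℝ)) ≤ 1) : ENNReal.ofReal (∑ i, y i) ≤ zC n P := by
  refine le_sInf ?_
  rintro _ ⟨x, hP, hcov, rfl⟩
  have hle : ∑ i, y i ≤ ∑ a ∈ x.support, (x a : ℝ) := by
    rw [← sum_mul_dotProduct_eq_sum_of_cover _ _ hcov]
    exact Finset.sum_le_sum fun a ha =>
      mul_le_of_le_one_right (x a).coe_nonneg (hy a (hP a ha))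
  calc ENNReal.ofReal (∑ i, y i) ≤ ENNReal.ofReal (∑ a ∈ x.support, (x a : ℝ)) :=
        ENNReal.ofReal_le_ofReal hle
    _ = ∑ a ∈ x.support, (x a : ℝ≥0∞) := by
        rw [← NNReal.coe_sum, ENNReal.ofReal_coe_nnreal, ENNReal.ofNNReal_finsetSum]

theorem le_one_of_mem_support_of_cover (x : (Fin n → ℕ) →₀ ℕ)
    (hcov : ∀ i, ∑ a ∈ x.support, x a * a i = 1) {a : Fin n → ℕ} (ha : a ∈ x.support)
    (i : Fin n) : a i ≤ 1 :=
  calc a i ≤ x a * a i :=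
        Nat.le_mul_of_pos_left _ (Nat.pos_of_ne_zero (Finsupp.mem_support_iff.mp ha))
    _ ≤ ∑ b ∈ x.support, x b * b i :=
        Finset.single_le_sum (f := fun b => x b * b i) (fun _ _ => Nat.zero_le _) ha
    _ = 1 := hcov i

end Covers

section Kinds

variable {ι κ : Type*} [Fintype ι] [Fintype κ] [DecidableEq κ] (kind : ι → κ)

def kindCount (a : ι → ℕ) (k : κ) : ℕ := ∑ i with kind i = k, a i

def binaryKindCounts : Finset (κ → ℕ) :=
  Fintype.piFinset fun k => range (#{i | kind i = k} + 1)

theorem comp_dotProduct_eq_dotProduct_kindCount (V : κ → ℕ) (a : ι → ℕ) :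
    (V ∘ kind) ⬝ᵥ a = V ⬝ᵥ kindCount kind a := by
  simp_rw [dotProduct, kindCount, Finset.mul_sum]
  rw [← Finset.sum_fiberwise univ kind]
  exact Finset.sum_congr rfl fun k _ => Finset.sum_congr rfl fun i hi => by
    rw [Function.comp_apply, (Finset.mem_filter.mp hi).2]

theorem kindCount_mem_binaryKindCounts {a : ι → ℕ} (ha : ∀ i, a i ≤ 1) :
    kindCount kind a ∈ binaryKindCounts kind := by
  refine Fintype.mem_piFinset.mpr fun k => Finset.mem_range_succ_iff.mpr ?_
  rw [Finset.card_eq_sum_ones]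
  exact Finset.sum_le_sum fun i _ => ha i

end Kinds

def itemKind : Fin 14 → Fin 8 := ![0, 0, 1, 1, 2, 3, 3, 4, 4, 4, 5, 5, 6, 7]

def kindLength : Fin 8 → ℕ := ![7, 10, 12, 15, 21, 22, 28, 31]

def kindDual : Fin 8 → ℕ := ![2, 3, 4, 6, 8, 10, 12, 13]

def kindBigWeight : Fin 8 → ℕ := ![0, 0, 0, 0, 1, 2, 2, 2]

def kindPaddedLength : Fin 8 → ℕ := ![7, 10, 12, 20, 21, 22, 28, 32]

theorem bin_weight_bounds {a : Fin 14 → ℕ} (ha : ∀ i, a i ≤ 1)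
    (hL : (kindLength ∘ itemKind) ⬝ᵥ a ≤ 42) :
    (kindDual ∘ itemKind) ⬝ᵥ a ≤ 16 ∧ (kindBigWeight ∘ itemKind) ⬝ᵥ a ≤ 2 ∧
      (0 < (kindBigWeight ∘ itemKind) ⬝ᵥ a → (kindPaddedLength ∘ itemKind) ⬝ᵥ a ≤ 42) := by
  simp only [comp_dotProduct_eq_dotProduct_kindCount] at hL ⊢
  exact (by decide +kernel : ∀ c ∈ binaryKindCounts itemKind, kindLength ⬝ᵥ c ≤ 42 →
    kindDual ⬝ᵥ c ≤ 16 ∧ kindBigWeight ⬝ᵥ c ≤ 2 ∧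
      (0 < kindBigWeight ⬝ᵥ c → kindPaddedLength ⬝ᵥ c ≤ 42))
    _ (kindCount_mem_binaryKindCounts _ ha) hL

theorem bigWeight_pos_of_mem_support (x : (Fin 14 → ℕ) →₀ ℕ)
    (hP : ∀ a ∈ x.support, (kindLength ∘ itemKind) ⬝ᵥ a ≤ 42)
    (hcov : ∀ i, ∑ a ∈ x.support, x a * a i = 1) (hm : ∑ a ∈ x.support, x a ≤ 6)
    {a₀ : Fin 14 → ℕ} (ha₀ : a₀ ∈ x.support) : 0 < (kindBigWeight ∘ itemKind) ⬝ᵥ a₀ := by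
  by_contra h₀
  have hx₀ : 1 ≤ x a₀ := Nat.one_le_iff_ne_zero.mpr (Finsupp.mem_support_iff.mp ha₀)
  have hsplit := Finset.sum_erase_add _ (fun a => x a) ha₀
  have : 11 ≤ 2 * ∑ a ∈ x.support.erase a₀, x a :=
    calc 11 = ∑ i, (kindBigWeight ∘ itemKind) i := by decide
      _ = ∑ a ∈ x.support, x a * ((kindBigWeight ∘ itemKind) ⬝ᵥ a) :=
          (sum_mul_dotProduct_eq_sum_of_cover _ _ hcov _).symm
      _ = ∑ a ∈ x.support.erase a₀, x a * ((kindBigWeight ∘ itemKind) ⬝ᵥ a) :=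
          (Finset.sum_erase _ (by rw [Nat.eq_zero_of_not_pos h₀, mul_zero])).symm
      _ ≤ ∑ a ∈ x.support.erase a₀, x a * 2 :=
          Finset.sum_le_sum fun a ha => Nat.mul_le_mul_left _ (bin_weight_bounds
            (le_one_of_mem_support_of_cover x hcov (Finset.mem_of_mem_erase ha))
            (hP a (Finset.mem_of_mem_erase ha))).2.1
      _ = 2 * ∑ a ∈ x.support.erase a₀, x a := by rw [← Finset.sum_mul, mul_comm]
  omega

theorem seven_le_of_cover (x : (Fin 14 → ℕ) →₀ ℕ)
    (hP : ∀ a ∈ x.support, (kindLength ∘ itemKind) ⬝ᵥ a ≤ 42)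
    (hcov : ∀ i, ∑ a ∈ x.support, x a * a i = 1) : 7 ≤ ∑ a ∈ x.support, x a := by
  by_contra! hm
  have : 253 ≤ 42 * ∑ a ∈ x.support, x a :=
    calc 253 = ∑ i, (kindPaddedLength ∘ itemKind) i := by decide
      _ = ∑ a ∈ x.support, x a * ((kindPaddedLength ∘ itemKind) ⬝ᵥ a) :=
          (sum_mul_dotProduct_eq_sum_of_cover _ _ hcov _).symm
      _ ≤ ∑ a ∈ x.support, x a * 42 :=
          Finset.sum_le_sum fun a ha => Nat.mul_le_mul_left _ ((bin_weight_bounds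
            (le_one_of_mem_support_of_cover x hcov ha) (hP a ha)).2.2
            (bigWeight_pos_of_mem_support x hP hcov (by omega) ha))
      _ = 42 * ∑ a ∈ x.support, x a := by rw [← Finset.sum_mul, mul_comm]
  omega

theorem mem_feasiblePatterns_natCast {n L : ℕ} {ℓ a : Fin n → ℕ} :
    a ∈ feasiblePatterns n L (fun i => (ℓ i : ℝ)) ↔ ℓ ⬝ᵥ a ≤ L := by
  simp only [feasiblePatterns, Set.mem_ofPred_eq, dotProduct]
  norm_cast

theorem mem_properPatterns_natCast {n L : ℕ} {ℓ a : Fin n → ℕ} :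
    a ∈ properPatterns n L (fun i => (ℓ i : ℝ)) ↔ IsBinary a ∧ ℓ ⬝ᵥ a ≤ L := by
  simp only [properPatterns, Set.mem_ofPred_eq, dotProduct]
  norm_cast

def patternOf {n : ℕ} (S : Finset (Fin n)) : Fin n → ℕ := fun i => if i ∈ S then 1 else 0

def packing : Fin 7 → Finset (Fin 14) :=
  ![{3, 13}, {0, 1, 12}, {7, 8}, {5, 10}, {6, 11}, {4, 9}, {2}]

def fractionalPatterns : Fin 14 → Finset (Fin 14) :=
  ![{2, 3, 11}, {7, 8}, {2, 3, 10}, {8, 9}, {4, 12}, {1, 4, 10}, {5, 11}, {2, 13}, {6, 10},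
    {7, 9}, {0, 4, 10}, {4, 5, 6}, {3, 13}, {0, 1, 12}]

def fractionalWeight : Fin 14 → ℕ := ![7, 8, 1, 8, 3, 3, 9, 8, 9, 8, 3, 7, 8, 13]

theorem zDf_eq : zDf 14 42 (fun i => ((kindLength ∘ itemKind) i : ℝ)) = 7 := by
  refine le_antisymm ?_ ?_
  · refine (zD_le_card (patternOf ∘ packing) (fun k => ?_) (by decide)).trans (by simp)
    exact mem_feasiblePatterns_natCast.mpr (by revert k; decide)
  · refine le_sInf ?_
    rintro _ ⟨x, hP, hcov, rfl⟩
    have := seven_le_of_cover x (fun a ha => mem_feasiblePatterns_natCast.mp (hP a ha)) hcov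
    exact_mod_cast this

theorem zCp_le : zCp 14 42 (fun i => ((kindLength ∘ itemKind) i : ℝ)) ≤ 95 / 16 := by
  refine (zC_le_sum (patternOf ∘ fractionalPatterns) (fun k => (fractionalWeight k : ℝ≥0) / 16)
    (fun k => mem_properPatterns_natCast.mpr ⟨fun i => ?_, by revert k; decide⟩)
    (fun i => ?_)).trans_eq ?_
  · simp only [Function.comp_apply, patternOf]
    split <;> omega
  · have hcov : ∑ k, fractionalWeight k * patternOf (fractionalPatterns k) i = 16 := by
      revert i; decide
    calc ∑ k, (((fractionalWeight k : ℝ≥0) / 16 : ℝ≥0) : ℝ) *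
          (patternOf (fractionalPatterns k) i : ℝ)
        = ((∑ k, fractionalWeight k * patternOf (fractionalPatterns k) i : ℕ) : ℝ) / 16 := by
          push_cast
          rw [Finset.sum_div]
          exact Finset.sum_congr rfl fun k _ => by ring
      _ = 1 := by rw [hcov]; norm_num
  · rw [← ENNReal.ofNNReal_finsetSum, ← Finset.sum_div, ← Nat.cast_sum,
      show ∑ k, fractionalWeight k = 95 by decide, ENNReal.coe_div (by norm_num)]
    simp

theorem le_zCp : 95 / 16 ≤ zCp 14 42 (fun i => ((kindLength ∘ itemKind) i : ℝ)) := by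
  refine le_trans (le_of_eq ?_) (ofReal_sum_le_zC (fun i => (kindDual (itemKind i) : ℝ) / 16)
    fun a ha => ?_)
  · rw [← Finset.sum_div, ← Nat.cast_sum, show ∑ i, kindDual (itemKind i) = 95 by decide,
      ENNReal.ofReal_div_of_pos (by norm_num)]
    simp
  · obtain ⟨hbin, hL⟩ := mem_properPatterns_natCast.mp ha
    calc ((fun i => (kindDual (itemKind i) : ℝ) / 16) ⬝ᵥ fun i => (a i : ℝ))
        = (((kindDual ∘ itemKind) ⬝ᵥ a : ℕ) : ℝ) / 16 := by
          simp only [dotProduct, Nat.cast_sum, Nat.cast_mul, Finset.sum_div, Function.comp_apply]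
          exact Finset.sum_congr rfl fun i _ => by ring
      _ ≤ 1 := by
          rw [div_le_one (by norm_num)]
          exact_mod_cast (bin_weight_bounds hbin hL).1

/-- the instance `E = (14, 42, (7,7,10,10,12,15,15,21,21,21,22,22,28,31))`
satisfies `Δ_p(E) = 17/16`. -/
theorem stmt_19 :
    properGap 14 42 ![7, 7, 10, 10, 12, 15, 15, 21, 21, 21, 22, 22, 28, 31] = 17 / 16 := by
  have hℓ : (![7, 7, 10, 10, 12, 15, 15, 21, 21, 21, 22, 22, 28, 31] : Fin 14 → ℝ) =
      fun i => ((kindLength ∘ itemKind) i : ℝ) := by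
    funext i; fin_cases i <;> simp [kindLength, itemKind]
  rw [properGap, hℓ, zDf_eq, le_antisymm zCp_le le_zCp]
  refine ENNReal.sub_eq_of_eq_add (ENNReal.div_ne_top (by norm_num) (by norm_num)) ?_
  rw [ENNReal.div_add_div_same, ENNReal.eq_div_iff (by norm_num) (by norm_num)]
  norm_num
end
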